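/- arXiv:1104.4439 — 8 statements merged into one kernel-verified Lean document; each statement's English description precedes it below -/
import Mathlib

section
/- Let A and B be abelian groups and let α, β, γ : A → B be injective maps such that for all x, y, z ∈ A, α(x) + β(y) + γ(z) = 0 if and only if z = x + y. Then there exist an injective group homomorphism φ : A → B and elements a, b ∈ B such that α(x) = φ(x) + a, β(x) = φ(x) + b, and γ(x) = −φ(x) − a − b for all x ∈ A. -/
/-!
Specialising `α x + β y + γ (x + y) = 0` at `y = 0` expresses `γ` through `α`, at `x = 0` then
expresses `β` through `α`, and substituting both back gives `α (x + y) = α x + α y - α 0`: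
`α` is a translate of the homomorphism `φ := α - α 0`.
-/

open Function

section

variable {A B : Type*} [AddCommGroup A] [AddCommGroup B]

def AddMonoidHom.ofAffine (f : A → B) (hf : ∀ x y, f (x + y) = f x + f y - f 0) : A →+ B :=
  AddMonoidHom.mk' (fun x => f x - f 0) fun x y => by rw [hf]; abel

@[simp]
theorem AddMonoidHom.ofAffine_apply (f : A → B) (hf : ∀ x y, f (x + y) = f x + f y - f 0)
    (x : A) : ofAffine f hf x = f x - f 0 :=
  rfl

theorem AddMonoidHom.injective_ofAffine {f : A → B} (hf : ∀ x y, f (x + y) = f x + f y - f 0)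
    (hinj : Injective f) : Injective (ofAffine f hf) :=
  fun _ _ hxy => hinj (sub_left_inj.mp hxy)

def IsAddTriple (α β γ : A → B) : Prop :=
  ∀ x y, α x + β y + γ (x + y) = 0

namespace IsAddTriple

variable {α β γ : A → B} (hT : IsAddTriple α β γ)
include hT

theorem third_eq (x : A) : γ x = -α x - β 0 := by
  have := hT x 0
  rw [add_zero] at this
  linear_combination (norm := abel) this

theorem second_eq (y : A) : β y = α y - α 0 + β 0 := by
  have := hT 0 y
  rw [zero_add] at this
  linear_combination (norm := abel) this - hT.third_eq y

theorem first_add (x y : A) : α (x + y) = α x + α y - α 0 := by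
  linear_combination (norm := abel) hT.second_eq y + hT.third_eq (x + y) - hT x y

end IsAddTriple

end

theorem stmt_0_general {A B : Type*} [AddCommGroup A] [AddCommGroup B]
    (α β γ : A → B) (hα : Function.Injective α)
    (h : ∀ x y z : A, α x + β y + γ z = 0 ↔ z = x + y) :
    ∃ (φ : A →+ B) (a b : B), Function.Injective φ ∧
      (∀ x, α x = φ x + a) ∧ (∀ x, β x = φ x + b) ∧ (∀ x, γ x = -φ x - a - b) := by
  have hT : IsAddTriple α β γ := fun x y => (h x y _).mpr rfl
  refine ⟨.ofAffine α hT.first_add, α 0, β 0, AddMonoidHom.injective_ofAffine _ hα,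
    fun x => ?_, fun x => ?_, fun x => ?_⟩
  · exact (sub_add_cancel _ _).symm
  · rw [hT.second_eq, AddMonoidHom.ofAffine_apply]
  · rw [hT.third_eq, AddMonoidHom.ofAffine_apply]
    abel

theorem stmt_0 {A B : Type*} [AddCommGroup A] [AddCommGroup B]
    (α β γ : A → B) (hα : Function.Injective α) (hβ : Function.Injective β)
    (hγ : Function.Injective γ)
    (h : ∀ x y z : A, α x + β y + γ z = 0 ↔ z = x + y) :
    ∃ (φ : A →+ B) (a b : B), Function.Injective φ ∧
      (∀ x, α x = φ x + a) ∧ (∀ x, β x = φ x + b) ∧ (∀ x, γ x = -φ x - a - b) :=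
  stmt_0_general α β γ hα h
end

section
/- In the projective plane over an algebraically closed field K of characteristic p (p = 0 or p > n), suppose three n-element subsets Λ₁ ⊆ {(ξ,0,1) : ξ ∈ L₁}, Λ₂ ⊆ {(0,η,1) : η ∈ L₂}, Λ₃ ⊆ {(1,1,ζ) : ζ ∈ L₃} form a dual 3-net (every line through a point of one component and a point of another meets the third in exactly one point). Then three points (1,0,ξ), (0,1,η), (1,1,ζ) are collinear iff ζ = ξ + η, and L₁ = L₂ = L₃ is an additive subgroup of K of order n; hence n is a power of p, contradicting p > n. Therefore no dual 3-net of order n lies on three concurrent lines when p = 0 or p > n. -/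
/-!
Collinearity of `(1,0,ξ)`, `(0,1,η)`, `(1,1,ζ)` means `ζ = ξ + η`. Taking two points `ξ₀ ≠ ξ₁` of
the first component, the net axioms send `η ∈ L₂` to `ξ₁ + η ∈ L₃` and back to
`η + (ξ₁ - ξ₀) ∈ L₂`, so translation by `g = ξ₁ - ξ₀ ≠ 0` permutes `L₂`. Summing `L₂` before and
after translating gives `n • g = 0`, which is impossible in characteristic `0` or `p > n`.
-/

theorem det_collinear_eq_zero_iff {K : Type*} [CommRing K] (ξ η ζ : K) :
    Matrix.det !![1, 0, ξ; 0, 1, η; 1, 1, ζ] = 0 ↔ ζ = ξ + η := by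
  rw [Matrix.det_fin_three]
  simp only [Matrix.of_apply, Matrix.cons_val', Matrix.cons_val_zero, Matrix.cons_val_one,
    Matrix.cons_val_two, Matrix.empty_val', Matrix.cons_val_fin_one, Matrix.head_cons,
    Matrix.tail_cons, Matrix.head_fin_const]
  constructor <;> intro h <;> linear_combination h

theorem add_mem_of_collinear {K : Type*} [CommRing K] {L₁ L₂ L₃ : Finset K}
    (h : ∀ ξ ∈ L₁, ∀ η ∈ L₂, ∃ ζ, ζ ∈ L₃ ∧ Matrix.det !![1, 0, ξ; 0, 1, η; 1, 1, ζ] = 0)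
    {ξ η : K} (hξ : ξ ∈ L₁) (hη : η ∈ L₂) : ξ + η ∈ L₃ := by
  obtain ⟨ζ, hζ, hdet⟩ := h ξ hξ η hη
  rwa [← (det_collinear_eq_zero_iff ξ η ζ).mp hdet]

theorem sub_mem_of_collinear {K : Type*} [CommRing K] {L₁ L₂ L₃ : Finset K}
    (h : ∀ ξ ∈ L₁, ∀ ζ ∈ L₃, ∃ η, η ∈ L₂ ∧ Matrix.det !![1, 0, ξ; 0, 1, η; 1, 1, ζ] = 0)
    {ξ ζ : K} (hξ : ξ ∈ L₁) (hζ : ζ ∈ L₃) : ζ - ξ ∈ L₂ := by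
  obtain ⟨η, hη, hdet⟩ := h ξ hξ ζ hζ
  rwa [(det_collinear_eq_zero_iff ξ η ζ).mp hdet, add_sub_cancel_left]

theorem Finset.card_nsmul_eq_zero_of_add_mem {G : Type*} [AddCommGroup G] [DecidableEq G]
    {s : Finset G} {g : G} (h : ∀ x ∈ s, x + g ∈ s) : s.card • g = 0 := by
  have himage : s.image (· + g) = s :=
    Finset.eq_of_subset_of_card_le (Finset.image_subset_iff.mpr h)
      (Finset.card_image_of_injective s (add_left_injective g)).ge
  have hsum : ∑ x ∈ s, x = ∑ x ∈ s, x + s.card • g := by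
    calc ∑ x ∈ s, x = ∑ x ∈ s.image (· + g), x := by rw [himage]
      _ = ∑ x ∈ s, (x + g) := Finset.sum_image fun _ _ _ _ => (add_left_injective g ·)
      _ = ∑ x ∈ s, x + s.card • g := by rw [Finset.sum_add_distrib, Finset.sum_const]
  exact add_eq_left.mp hsum.symm

theorem CharP.natCast_ne_zero_of_lt {R : Type*} [AddMonoidWithOne R] (p : ℕ) [CharP R p]
    {n : ℕ} (hp : p = 0 ∨ n < p) (hn : n ≠ 0) : (n : R) ≠ 0 := by
  rw [Ne, CharP.cast_eq_zero_iff R p]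
  rcases hp with rfl | hlt
  · simpa using hn
  · exact fun hdvd => (Nat.le_of_dvd (Nat.pos_of_ne_zero hn) hdvd).not_gt hlt

theorem stmt_4_general {K : Type*} [Field K] (p n : ℕ) [CharP K p]
    (hp : p = 0 ∨ n < p) (hn : 2 ≤ n)
    (L₁ L₂ L₃ : Finset K)
    (h₁ : L₁.card = n) (h₂ : L₂.card = n)
    (net₁₂ : ∀ ξ ∈ L₁, ∀ η ∈ L₂, ∃! ζ, ζ ∈ L₃ ∧
      Matrix.det !![1, 0, ξ; 0, 1, η; 1, 1, ζ] = 0)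
    (net₁₃ : ∀ ξ ∈ L₁, ∀ ζ ∈ L₃, ∃! η, η ∈ L₂ ∧
      Matrix.det !![1, 0, ξ; 0, 1, η; 1, 1, ζ] = 0) :
    (∀ ξ η ζ : K, Matrix.det !![1, 0, ξ; 0, 1, η; 1, 1, ζ] = 0 ↔ ζ = ξ + η) ∧ False := by
  classical
  refine ⟨det_collinear_eq_zero_iff, ?_⟩
  obtain ⟨ξ₀, hξ₀, ξ₁, hξ₁, hne⟩ := Finset.one_lt_card.mp (by omega : 1 < L₁.card)
  have htranslate : ∀ η ∈ L₂, η + (ξ₁ - ξ₀) ∈ L₂ := by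
    intro η hη
    have hζ := add_mem_of_collinear (fun ξ hξ η hη => (net₁₂ ξ hξ η hη).exists) hξ₁ hη
    have hη' := sub_mem_of_collinear (fun ξ hξ ζ hζ => (net₁₃ ξ hξ ζ hζ).exists) hξ₀ hζ
    rwa [add_sub_right_comm, add_comm] at hη'
  have hzero := Finset.card_nsmul_eq_zero_of_add_mem htranslate
  rw [h₂, nsmul_eq_mul, mul_eq_zero] at hzero
  exact hzero.elim (CharP.natCast_ne_zero_of_lt p hp (by omega)) (sub_ne_zero.mpr hne.symm)

/-- No dual 3-net of order `n ≥ 2` lies on three concurrent lines when `p = 0` or `p > n`.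
The three lines are `Y = 0`, `X = 0`, `X − Y = 0`; points of the components are
`(1,0,ξ)`, `(0,1,η)`, `(1,1,ζ)` and collinearity amounts to the vanishing of the
determinant, i.e. `ζ = ξ + η`. -/
theorem stmt_4 {K : Type*} [Field K] [IsAlgClosed K] (p n : ℕ) [CharP K p]
    (hp : p = 0 ∨ n < p) (hn : 2 ≤ n)
    (L₁ L₂ L₃ : Finset K)
    (h₁ : L₁.card = n) (h₂ : L₂.card = n) (h₃ : L₃.card = n)
    (net₁₂ : ∀ ξ ∈ L₁, ∀ η ∈ L₂, ∃! ζ, ζ ∈ L₃ ∧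
      Matrix.det !![1, 0, ξ; 0, 1, η; 1, 1, ζ] = 0)
    (net₁₃ : ∀ ξ ∈ L₁, ∀ ζ ∈ L₃, ∃! η, η ∈ L₂ ∧
      Matrix.det !![1, 0, ξ; 0, 1, η; 1, 1, ζ] = 0)
    (net₂₃ : ∀ η ∈ L₂, ∀ ζ ∈ L₃, ∃! ξ, ξ ∈ L₁ ∧
      Matrix.det !![1, 0, ξ; 0, 1, η; 1, 1, ζ] = 0) :
    (∀ ξ η ζ : K, Matrix.det !![1, 0, ξ; 0, 1, η; 1, 1, ζ] = 0 ↔ ζ = ξ + η) ∧ False :=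
  stmt_4_general p n hp hn L₁ L₂ L₃ h₁ h₂ net₁₂ net₁₃
end

section
/- Every triangular dual 3-net of order n over an algebraically closed field K realizes a finite cyclic group; more precisely, if L₁, L₂, L₃ ⊆ K* are n-element subsets with 1 ∈ L₁, 1 ∈ L₂ and the property that for ξ ∈ L₁, ζ ∈ L₃ one always has ξζ ∈ L₂, and every element of L₂ factors uniquely this way (the dual 3-net condition), then L₁ = L₂ = L₃ = L where L is a finite multiplicative subgroup of K*, hence cyclic of order n. -/
/-!
Putting `1` into the net equations collapses the three components: `ζ = 1 · ζ` shows
`L₃ ⊆ L₂`, `η = 1⁻¹ · η` shows `L₂ ⊆ L₃`, and `1 = 1⁻¹ · 1 ∈ L₃` then gives `L₁ = L₂` through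
`ξ = ξ · 1` and `η = η · 1⁻¹`. The common component is closed under `η ζ⁻¹`, hence a subgroup, and a
finite subgroup of the units of a field is cyclic.
-/

section DualNet

variable {G : Type*} [Group G] {L₁ L₂ L₃ : Set G}

theorem dualNet_eq_of_one_mem (e₁ : (1 : G) ∈ L₁) (e₂ : (1 : G) ∈ L₂)
    (net₁₃ : ∀ ξ ∈ L₁, ∀ ζ ∈ L₃, ξ * ζ ∈ L₂)
    (net₁₂ : ∀ ξ ∈ L₁, ∀ η ∈ L₂, ξ⁻¹ * η ∈ L₃)
    (net₂₃ : ∀ η ∈ L₂, ∀ ζ ∈ L₃, η * ζ⁻¹ ∈ L₁) :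
    L₁ = L₂ ∧ L₂ = L₃ := by
  have e₃ : (1 : G) ∈ L₃ := by simpa using net₁₂ 1 e₁ 1 e₂
  have h₂₃ : L₂ = L₃ := Set.Subset.antisymm
    (fun η hη => by simpa using net₁₂ 1 e₁ η hη) (fun ζ hζ => by simpa using net₁₃ 1 e₁ ζ hζ)
  have h₁₂ : L₁ = L₂ := Set.Subset.antisymm
    (fun ξ hξ => by simpa using net₁₃ ξ hξ 1 e₃) (fun η hη => by simpa using net₂₃ η hη 1 e₃)
  exact ⟨h₁₂, h₂₃⟩

theorem exists_subgroup_eq_of_dualNet (e₁ : (1 : G) ∈ L₁) (e₂ : (1 : G) ∈ L₂)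
    (net₁₃ : ∀ ξ ∈ L₁, ∀ ζ ∈ L₃, ξ * ζ ∈ L₂)
    (net₁₂ : ∀ ξ ∈ L₁, ∀ η ∈ L₂, ξ⁻¹ * η ∈ L₃)
    (net₂₃ : ∀ η ∈ L₂, ∀ ζ ∈ L₃, η * ζ⁻¹ ∈ L₁) :
    ∃ H : Subgroup G, L₁ = H ∧ L₂ = H ∧ L₃ = H := by
  obtain ⟨h₁₂, h₂₃⟩ := dualNet_eq_of_one_mem e₁ e₂ net₁₃ net₁₂ net₂₃
  subst h₁₂ h₂₃
  exact ⟨Subgroup.ofDiv L₁ ⟨1, e₁⟩ net₂₃, rfl, rfl, rfl⟩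

end DualNet

theorem stmt_6_general {K : Type*} [Field K] (n : ℕ)
    (L₁ L₂ L₃ : Finset Kˣ)
    (h₁ : L₁.card = n)
    (e₁ : (1 : Kˣ) ∈ L₁) (e₂ : (1 : Kˣ) ∈ L₂)
    (net₁₃ : ∀ ξ ∈ L₁, ∀ ζ ∈ L₃, ξ * ζ ∈ L₂)
    (net₁₂ : ∀ ξ ∈ L₁, ∀ η ∈ L₂, ξ⁻¹ * η ∈ L₃)
    (net₂₃ : ∀ η ∈ L₂, ∀ ζ ∈ L₃, η * ζ⁻¹ ∈ L₁) :
    L₁ = L₂ ∧ L₂ = L₃ ∧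
      ∃ H : Subgroup Kˣ, (L₁ : Set Kˣ) = (H : Set Kˣ) ∧ IsCyclic H ∧ Nat.card H = n := by
  obtain ⟨H, hH₁, hH₂, hH₃⟩ :=
    exists_subgroup_eq_of_dualNet (L₁ := (L₁ : Set Kˣ)) (L₂ := L₂) (L₃ := L₃)
      e₁ e₂ net₁₃ net₁₂ net₂₃
  have hcard : Nat.card H = n := by
    rw [← h₁, ← Set.ncard_coe_finset, hH₁, ← Nat.card_coe_set_eq]
    rfl
  have : Finite H := (hH₁ ▸ L₁.finite_toSet : (H : Set Kˣ).Finite).to_subtype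
  exact ⟨Finset.coe_inj.1 (hH₁.trans hH₂.symm), Finset.coe_inj.1 (hH₂.trans hH₃.symm), H, hH₁,
    isCyclic_subgroup_units H, hcard⟩

/-- Every triangular dual 3-net of order `n` realizes a finite cyclic group. -/
theorem stmt_6 {K : Type*} [Field K] [IsAlgClosed K] (n : ℕ)
    (L₁ L₂ L₃ : Finset Kˣ)
    (h₁ : L₁.card = n) (h₂ : L₂.card = n) (h₃ : L₃.card = n)
    (e₁ : (1 : Kˣ) ∈ L₁) (e₂ : (1 : Kˣ) ∈ L₂)
    (net₁₃ : ∀ ξ ∈ L₁, ∀ ζ ∈ L₃, ξ * ζ ∈ L₂)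
    (net₁₂ : ∀ ξ ∈ L₁, ∀ η ∈ L₂, ξ⁻¹ * η ∈ L₃)
    (net₂₃ : ∀ η ∈ L₂, ∀ ζ ∈ L₃, η * ζ⁻¹ ∈ L₁) :
    L₁ = L₂ ∧ L₂ = L₃ ∧
      ∃ H : Subgroup Kˣ, (L₁ : Set Kˣ) = (H : Set Kˣ) ∧ IsCyclic H ∧ Nat.card H = n :=
  stmt_6_general n L₁ L₂ L₃ h₁ e₁ e₂ net₁₃ net₁₂ net₂₃
end

section
/- Let F be an abelian group and let Λ₁, Λ₂, Λ₃ ⊆ F be finite subsets of the same cardinality n ≥ 1 such that: for all A ∈ Λ₁, B ∈ Λ₂ there is C ∈ Λ₃ with A + B + C = 0; for all A ∈ Λ₁, C ∈ Λ₃ there is B ∈ Λ₂ with A + B + C = 0; and for all B ∈ Λ₂, C ∈ Λ₃ there is A ∈ Λ₁ with A + B + C = 0. Then there exist a subgroup T ≤ F of order n and elements g₁, g₂, g₃ ∈ F with g₁ + g₂ + g₃ = 0 such that Λᵢ = T + gᵢ for i = 1, 2, 3. -/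
/-!
Given `a ∈ Λ₁` and `b ∈ Λ₂`, the closure conditions carry `x + a ∈ Λ₁` to `-(x + a + b) ∈ Λ₃`
and back to `x + b ∈ Λ₂`, so all three sets are translates of one set `T = Λ₁ - a`. Since `T`
does not depend on the base point `a ∈ Λ₁`, `Λ₁` is closed under `x - y + z`, which makes `T` a
subgroup; the three translations `a`, `b`, `-(a + b)` sum to zero.
-/

section Coset

variable {G : Type*} [AddGroup G]

theorem exists_addSubgroup_coe_eq_preimage_add {S : Set G} {a : G} (ha : a ∈ S)
    (hS : ∀ x ∈ S, ∀ y ∈ S, ∀ z ∈ S, x - y + z ∈ S) :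
    ∃ T : AddSubgroup G, (T : Set G) = (· + a) ⁻¹' S :=
  ⟨{ carrier := (· + a) ⁻¹' S
     zero_mem' := by simpa using ha
     add_mem' := fun {x y} hx hy => by
       have hxy := hS _ hx _ ha _ hy
       rwa [add_sub_cancel_right, ← add_assoc] at hxy
     neg_mem' := fun {x} hx => by
       have hx' := hS _ ha _ hx _ ha
       rwa [sub_eq_add_neg, neg_add_rev, add_neg_cancel_left] at hx' }, rfl⟩

theorem neg_mem_of_exists_add_eq_zero {S : Set G} {s : G} (h : ∃ x ∈ S, s + x = 0) : -s ∈ S := by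
  obtain ⟨x, hx, hsx⟩ := h
  rwa [← eq_neg_of_add_eq_zero_right hsx]

end Coset

section DualNet

variable {F : Type*} [AddCommGroup F]

structure IsDualNet (S₁ S₂ S₃ : Set F) : Prop where
  neg_add_mem₁₂ : ∀ a ∈ S₁, ∀ b ∈ S₂, -(a + b) ∈ S₃
  neg_add_mem₁₃ : ∀ a ∈ S₁, ∀ c ∈ S₃, -(a + c) ∈ S₂
  neg_add_mem₂₃ : ∀ b ∈ S₂, ∀ c ∈ S₃, -(b + c) ∈ S₁

namespace IsDualNet

variable {S₁ S₂ S₃ : Set F}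

theorem swap₁₂ (h : IsDualNet S₁ S₂ S₃) : IsDualNet S₂ S₁ S₃ where
  neg_add_mem₁₂ b hb a ha := add_comm a b ▸ h.neg_add_mem₁₂ a ha b hb
  neg_add_mem₁₃ := h.neg_add_mem₂₃
  neg_add_mem₂₃ := h.neg_add_mem₁₃

theorem swap₂₃ (h : IsDualNet S₁ S₂ S₃) : IsDualNet S₁ S₃ S₂ where
  neg_add_mem₁₂ := h.neg_add_mem₁₃
  neg_add_mem₁₃ := h.neg_add_mem₁₂
  neg_add_mem₂₃ c hc b hb := add_comm b c ▸ h.neg_add_mem₂₃ b hb c hc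

theorem add_mem_of_add_mem (h : IsDualNet S₁ S₂ S₃) {a b x : F} (ha : a ∈ S₁) (hb : b ∈ S₂)
    (hx : x + a ∈ S₁) : x + b ∈ S₂ := by
  have hc : -(x + a + b) ∈ S₃ := h.neg_add_mem₁₂ _ hx _ hb
  have key : -(a + -(x + a + b)) = x + b := by abel
  exact key ▸ h.neg_add_mem₁₃ _ ha _ hc

theorem preimage_add_eq (h : IsDualNet S₁ S₂ S₃) {a b : F} (ha : a ∈ S₁) (hb : b ∈ S₂) :
    (· + a) ⁻¹' S₁ = (· + b) ⁻¹' S₂ :=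
  Set.ext fun _ => ⟨h.add_mem_of_add_mem ha hb, h.swap₁₂.add_mem_of_add_mem hb ha⟩

theorem sub_add_mem (h : IsDualNet S₁ S₂ S₃) {b : F} (hb : b ∈ S₂) :
    ∀ x ∈ S₁, ∀ y ∈ S₁, ∀ z ∈ S₁, x - y + z ∈ S₁ := by
  intro x hx y hy z hz
  have hxy : x - y ∈ (· + y) ⁻¹' S₁ := by simpa using hx
  rwa [h.preimage_add_eq hy hb, ← h.preimage_add_eq hz hb] at hxy

end IsDualNet

end DualNet

theorem stmt_8_general {F : Type*} [AddCommGroup F] (n : ℕ) (hn : 1 ≤ n)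
    (Λ₁ Λ₂ Λ₃ : Finset F)
    (h₁ : Λ₁.card = n) (h₂ : Λ₂.card = n)
    (net₁₂ : ∀ A ∈ Λ₁, ∀ B ∈ Λ₂, ∃ C ∈ Λ₃, A + B + C = 0)
    (net₁₃ : ∀ A ∈ Λ₁, ∀ C ∈ Λ₃, ∃ B ∈ Λ₂, A + B + C = 0)
    (net₂₃ : ∀ B ∈ Λ₂, ∀ C ∈ Λ₃, ∃ A ∈ Λ₁, A + B + C = 0) :
    ∃ (T : AddSubgroup F) (g₁ g₂ g₃ : F), Nat.card T = n ∧ g₁ + g₂ + g₃ = 0 ∧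
      (Λ₁ : Set F) = (· + g₁) '' (T : Set F) ∧
      (Λ₂ : Set F) = (· + g₂) '' (T : Set F) ∧
      (Λ₃ : Set F) = (· + g₃) '' (T : Set F) := by
  obtain ⟨a, ha⟩ : Λ₁.Nonempty := Finset.card_pos.mp (h₁ ▸ hn)
  obtain ⟨b, hb⟩ : Λ₂.Nonempty := Finset.card_pos.mp (h₂ ▸ hn)
  have net : IsDualNet (Λ₁ : Set F) Λ₂ Λ₃ :=
    { neg_add_mem₁₂ := fun A hA B hB => neg_mem_of_exists_add_eq_zero (net₁₂ A hA B hB)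
      neg_add_mem₁₃ := fun A hA C hC => neg_mem_of_exists_add_eq_zero <|
        (net₁₃ A hA C hC).imp fun _ ⟨hB, h⟩ => ⟨hB, by rwa [add_right_comm]⟩
      neg_add_mem₂₃ := fun B hB C hC => neg_mem_of_exists_add_eq_zero <|
        (net₂₃ B hB C hC).imp fun _ ⟨hA, h⟩ => ⟨hA, by rwa [add_comm, ← add_assoc]⟩ }
  have hc : -(a + b) ∈ (Λ₃ : Set F) := net.neg_add_mem₁₂ a ha b hb
  obtain ⟨T, hT⟩ := exists_addSubgroup_coe_eq_preimage_add ha (net.sub_add_mem hb)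
  refine ⟨T, a, b, -(a + b), ?_, add_neg_cancel _, ?_, ?_, ?_⟩
  · rw [← SetLike.coe_sort_coe, hT, Nat.card_preimage_of_injective (add_left_injective a)
      ((add_right_surjective a).range_eq ▸ Set.subset_univ _), Nat.card_coe_set_eq,
      Set.ncard_coe_finset, h₁]
  · rw [hT, Set.image_preimage_eq _ (add_right_surjective a)]
  · rw [hT, net.preimage_add_eq ha hb, Set.image_preimage_eq _ (add_right_surjective b)]
  · rw [hT, net.swap₂₃.preimage_add_eq ha hc, Set.image_preimage_eq _ (add_right_surjective _)]

theorem stmt_8 {F : Type*} [AddCommGroup F] (n : ℕ) (hn : 1 ≤ n)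
    (Λ₁ Λ₂ Λ₃ : Finset F)
    (h₁ : Λ₁.card = n) (h₂ : Λ₂.card = n) (h₃ : Λ₃.card = n)
    (net₁₂ : ∀ A ∈ Λ₁, ∀ B ∈ Λ₂, ∃ C ∈ Λ₃, A + B + C = 0)
    (net₁₃ : ∀ A ∈ Λ₁, ∀ C ∈ Λ₃, ∃ B ∈ Λ₂, A + B + C = 0)
    (net₂₃ : ∀ B ∈ Λ₂, ∀ C ∈ Λ₃, ∃ A ∈ Λ₁, A + B + C = 0) :
    ∃ (T : AddSubgroup F) (g₁ g₂ g₃ : F), Nat.card T = n ∧ g₁ + g₂ + g₃ = 0 ∧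
      (Λ₁ : Set F) = (· + g₁) '' (T : Set F) ∧
      (Λ₂ : Set F) = (· + g₂) '' (T : Set F) ∧
      (Λ₃ : Set F) = (· + g₃) '' (T : Set F) :=
  stmt_8_general n hn Λ₁ Λ₂ Λ₃ h₁ h₂ net₁₂ net₁₃ net₂₃
end

section
/- Under the hypotheses of the previous statement (Λ₁, Λ₂, Λ₃ ⊆ F finite of equal size satisfying the zero-sum closure conditions), for any A₁, A₂, A₃ ∈ Λ₁ there exists A* ∈ Λ₁ such that A₁ − A₂ = A* − A₃. -/
/-!
If `x₁ + y + z = 0` and `x₂ + y' + z = 0`, then `y' = x₁ - x₂ + y`; so each class of the net is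
stable under translation by differences of another class. Translating some `B ∈ Λ₂` by `A₁ - A₂`
and then translating `A₃` by the resulting difference of elements of `Λ₂` gives `A'`.
-/

theorem Set.sub_add_mem_of_zero_sum_closed {F : Type*} [AddCommGroup F] {X Y Z : Set F}
    (hXY : ∀ x ∈ X, ∀ y ∈ Y, ∃ z ∈ Z, x + y + z = 0)
    (hXZ : ∀ x ∈ X, ∀ z ∈ Z, ∃ y ∈ Y, x + y + z = 0)
    {x₁ x₂ y : F} (hx₁ : x₁ ∈ X) (hx₂ : x₂ ∈ X) (hy : y ∈ Y) : x₁ - x₂ + y ∈ Y := by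
  obtain ⟨z, hz, hxyz⟩ := hXY x₁ hx₁ y hy
  obtain ⟨y', hy', hxyz'⟩ := hXZ x₂ hx₂ z hz
  have : y' = x₁ - x₂ + y := eq_of_sub_eq_zero <| calc
    y' - (x₁ - x₂ + y) = (x₂ + y' + z) - (x₁ + y + z) := by abel
    _ = 0 := by rw [hxyz, hxyz', sub_zero]
  exact this ▸ hy'

theorem stmt_9_general {F : Type*} [AddCommGroup F] (n : ℕ)
    (Λ₁ Λ₂ Λ₃ : Finset F)
    (h₁ : Λ₁.card = n) (h₂ : Λ₂.card = n)
    (net₁₂ : ∀ A ∈ Λ₁, ∀ B ∈ Λ₂, ∃ C ∈ Λ₃, A + B + C = 0)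
    (net₁₃ : ∀ A ∈ Λ₁, ∀ C ∈ Λ₃, ∃ B ∈ Λ₂, A + B + C = 0)
    (net₂₃ : ∀ B ∈ Λ₂, ∀ C ∈ Λ₃, ∃ A ∈ Λ₁, A + B + C = 0) :
    ∀ A₁ ∈ Λ₁, ∀ A₂ ∈ Λ₁, ∀ A₃ ∈ Λ₁, ∃ A' ∈ Λ₁, A₁ - A₂ = A' - A₃ := by
  intro A₁ hA₁ A₂ hA₂ A₃ hA₃
  obtain ⟨B, hB⟩ : Λ₂.Nonempty := by
    rw [← Finset.card_pos, h₂, ← h₁, Finset.card_pos]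
    exact ⟨A₁, hA₁⟩
  have hB' : A₁ - A₂ + B ∈ Λ₂ :=
    Set.sub_add_mem_of_zero_sum_closed (X := Λ₁) (Z := Λ₃) net₁₂ net₁₃ hA₁ hA₂ hB
  have hA' : (A₁ - A₂ + B) - B + A₃ ∈ Λ₁ :=
    Set.sub_add_mem_of_zero_sum_closed (X := Λ₂) (Z := Λ₃)
      (fun b hb a ha => by simpa only [Finset.mem_coe, add_comm b a] using net₁₂ a ha b hb)
      (fun b hb c hc => by simpa only [Finset.mem_coe, add_comm b] using net₂₃ b hb c hc) hB' hB hA₃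
  exact ⟨_, hA', by abel⟩

theorem stmt_9 {F : Type*} [AddCommGroup F] (n : ℕ)
    (Λ₁ Λ₂ Λ₃ : Finset F)
    (h₁ : Λ₁.card = n) (h₂ : Λ₂.card = n) (h₃ : Λ₃.card = n)
    (net₁₂ : ∀ A ∈ Λ₁, ∀ B ∈ Λ₂, ∃ C ∈ Λ₃, A + B + C = 0)
    (net₁₃ : ∀ A ∈ Λ₁, ∀ C ∈ Λ₃, ∃ B ∈ Λ₂, A + B + C = 0)
    (net₂₃ : ∀ B ∈ Λ₂, ∀ C ∈ Λ₃, ∃ A ∈ Λ₁, A + B + C = 0) :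
    ∀ A₁ ∈ Λ₁, ∀ A₂ ∈ Λ₁, ∀ A₃ ∈ Λ₁, ∃ A' ∈ Λ₁, A₁ - A₂ = A' - A₃ :=
  stmt_9_general n Λ₁ Λ₂ Λ₃ h₁ h₂ net₁₂ net₁₃ net₂₃
end

section
/- Let G be a group and suppose there is a subset S ⊆ G closed under the operation (g, h) ↦ g·h⁻¹·g. If H ≤ G is a cyclic subgroup of order 6 with 1 ∈ S ∩ H and |S ∩ H| ≥ 3, then S ∩ H is a subgroup of H, equal either to H itself or to the unique subgroup of H of order 3. -/
/-!
If `S` contains `1` and is closed under `(x, y) ↦ x y⁻¹ x`, then applying the operation to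
`x ^ (n + 1)` and `x ^ n` (or to `x ^ n` and `x ^ (n + 1)`) walks up (or down) the powers of `x`,
so `S` contains every power of each of its elements. Inside `H = ⟨g⟩ ≅ C₆`, the set `S ∩ H`
therefore equals `H` as soon as it contains `g` or `g⁻¹ = g⁵`. Otherwise it contains `⟨g²⟩` when it
contains `g²` or `g⁴ = g⁻²`, and then it cannot contain `g³`, because `g² (g³)⁻¹ g² = g`.
Failing both, `S ∩ H ⊆ {1, g³}`, which is too small.
-/

open Subgroup

section SymmetricClosed

variable {G : Type*} [Group G] {S : Set G}

theorem zpow_mem_of_mul_inv_mul_mem (hS : ∀ g ∈ S, ∀ h ∈ S, g * h⁻¹ * g ∈ S) (h1 : (1 : G) ∈ S)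
    {g : G} (hg : g ∈ S) (n : ℤ) : g ^ n ∈ S := by
  suffices h : ∀ n : ℤ, g ^ n ∈ S ∧ g ^ (n + 1) ∈ S from (h n).1
  intro n
  induction n using Int.induction_on with
  | zero => simpa using And.intro h1 hg
  | succ n ih =>
    refine ⟨ih.2, ?_⟩
    convert hS _ ih.2 _ ih.1 using 1
    group
  | pred n ih =>
    refine ⟨?_, by simpa using ih.1⟩
    convert hS _ ih.1 _ ih.2 using 1
    group

theorem zpowers_subset_of_mul_inv_mul_mem (hS : ∀ g ∈ S, ∀ h ∈ S, g * h⁻¹ * g ∈ S)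
    (h1 : (1 : G) ∈ S) {g : G} (hg : g ∈ S) : (zpowers g : Set G) ⊆ S := by
  rintro _ ⟨n, rfl⟩
  exact zpow_mem_of_mul_inv_mul_mem hS h1 hg n

end SymmetricClosed

theorem exists_pow_eq_of_mem_zpowers {G : Type*} [Group G] {g x : G} (hg : IsOfFinOrder g)
    (hx : x ∈ zpowers g) : ∃ n < orderOf g, g ^ n = x := by
  obtain ⟨n, rfl⟩ := (Submonoid.mem_powers_iff _ _).1 (hg.mem_powers_iff_mem_zpowers.2 hx)
  exact ⟨n % orderOf g, Nat.mod_lt _ hg.orderOf_pos, pow_mod_orderOf g n⟩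

theorem eq_zpowers_or_eq_zpowers_sq_of_orderOf_eq_six {G : Type*} [Group G] {T : Set G}
    (hT : ∀ g ∈ T, ∀ h ∈ T, g * h⁻¹ * g ∈ T) (h1 : (1 : G) ∈ T) {g : G} (hg : orderOf g = 6)
    (hTg : T ⊆ zpowers g) (h3 : 3 ≤ T.ncard) : T = zpowers g ∨ T = zpowers (g ^ 2) := by
  have hpowers : ∀ {x}, x ∈ T → (zpowers x : Set G) ⊆ T :=
    zpowers_subset_of_mul_inv_mul_mem hT h1
  have hinv : ∀ {x}, x ∈ T → x⁻¹ ∈ T := fun hx => by simpa using hT 1 h1 _ hx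
  have hg6 : g ^ 6 = 1 := hg ▸ pow_orderOf_eq_one g
  have hmem : ∀ x ∈ T, ∃ n < 6, g ^ n = x := fun x hx =>
    hg ▸ exists_pow_eq_of_mem_zpowers (orderOf_pos_iff.1 (by omega)) (hTg hx)
  by_cases hg1 : g ∈ T
  · exact .inl (hTg.antisymm (hpowers hg1))
  have hg5 : g ^ 5 ∉ T := fun h => by
    have : (g ^ 5)⁻¹ = g := inv_eq_of_mul_eq_one_right (by rw [← pow_succ, hg6])
    exact hg1 (this ▸ hinv h)
  by_cases hg2 : g ^ 2 ∈ T
  · refine .inr (Set.Subset.antisymm (fun x hx => ?_) (hpowers hg2))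
    obtain ⟨n, hn, rfl⟩ := hmem x hx
    interval_cases n
    · exact ⟨0, by simp⟩
    · exact absurd (by simpa using hx) hg1
    · exact mem_zpowers _
    · exact absurd (by convert hT _ hg2 _ hx using 1; group) hg1
    · exact ⟨2, by group⟩
    · exact absurd hx hg5
  have hg4 : g ^ 4 ∉ T := fun h => by
    have : (g ^ 4)⁻¹ = g ^ 2 := inv_eq_of_mul_eq_one_right (by rw [← pow_add, hg6])
    exact hg2 (this ▸ hinv h)
  have hsub : T ⊆ {1, g ^ 3} := fun x hx => by
    obtain ⟨n, hn, rfl⟩ := hmem x hx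
    interval_cases n <;> simp_all
  have := (Set.ncard_le_ncard hsub).trans (Set.ncard_insert_le _ _)
  rw [Set.ncard_singleton] at this
  omega

theorem stmt_12 {G : Type*} [Group G] (S : Set G)
    (hS : ∀ g ∈ S, ∀ h ∈ S, g * h⁻¹ * g ∈ S)
    (H : Subgroup G) (hcyc : IsCyclic H) (hcard : Nat.card H = 6)
    (hone : (1 : G) ∈ S ∩ (H : Set G)) (hbig : 3 ≤ (S ∩ (H : Set G)).ncard) :
    ∃ T : Subgroup G, T ≤ H ∧ S ∩ (H : Set G) = (T : Set G) ∧
      (T = H ∨ Nat.card T = 3) := by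
  obtain ⟨g, rfl⟩ := H.isCyclic_iff_exists_zpowers_eq_top.1 hcyc
  have hg : orderOf g = 6 := Nat.card_zpowers g ▸ hcard
  have hclosed : ∀ x ∈ S ∩ (zpowers g : Set G), ∀ y ∈ S ∩ (zpowers g : Set G),
      x * y⁻¹ * x ∈ S ∩ (zpowers g : Set G) := fun x hx y hy =>
    ⟨hS x hx.1 y hy.1, mul_mem (mul_mem hx.2 (inv_mem hy.2)) hx.2⟩
  rcases eq_zpowers_or_eq_zpowers_sq_of_orderOf_eq_six hclosed hone hg
    Set.inter_subset_right hbig with h | h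
  · exact ⟨zpowers g, le_rfl, h, .inl rfl⟩
  · refine ⟨zpowers (g ^ 2), zpowers_le.2 (pow_mem (mem_zpowers g) 2), h, .inr ?_⟩
    rw [Nat.card_zpowers, orderOf_pow_of_dvd two_ne_zero (by rw [hg]; norm_num), hg]
end

section
/- Every group of order 16 contains a subgroup of index 2 that is either abelian or dihedral. -/
/-!
If `Z(G) = G`, any subgroup of order 8 will do. Otherwise `G`, a 2-group, is nilpotent, so some
`x` lies in the second centre but not in `Z(G)`. All commutators `⁅x, g⁆` then lie in `Z(G)`, so
`x` has at most `|Z(G)|` conjugates, i.e. `|G : C(x)| ≤ |Z(G)|`; on the other hand `Z(G)` and `x`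
are both central in `C(x)`, so `|Z(C(x))| ≥ 2 |Z(G)|`. With `|G : C(x)| · |C(x)| = 16` this forces
`|G : C(x)| = 2` and `|C(x) : Z(C(x))| ≤ 2`, so `C(x)` is abelian.
-/

open Subgroup
open scoped commutatorElement

section

variable {G : Type*} [Group G]

lemma Subgroup.two_mul_card_le_card_of_lt {H K : Subgroup G} [Finite K] (h : H < K) :
    2 * Nat.card H ≤ Nat.card K := by
  have hmul : Nat.card H * H.relIndex K = Nat.card K := by
    rw [← relIndex_bot_left, ← relIndex_bot_left, relIndex_mul_relIndex ⊥ H K bot_le h.le]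
  have hne_zero : H.relIndex K ≠ 0 := right_ne_zero_of_mul (hmul.trans_ne Nat.card_pos.ne')
  have hne_one : H.relIndex K ≠ 1 := fun h1 => h.not_ge (relIndex_eq_one.mp h1)
  rw [← hmul, mul_comm]
  exact Nat.mul_le_mul_left _ (by omega)

lemma Subgroup.index_centralizer_le_card [Finite G] {N : Subgroup G} {x : G}
    (hx : ∀ g, ⁅x, g⁆ ∈ N) : (centralizer {x}).index ≤ Nat.card N := by
  -- `g C(x) ↦ ⁅g, x⁆` is injective, and its values lie in `N`
  rw [index_eq_card]
  refine Nat.card_le_card_of_injective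
    (fun q => ⟨quotientCentralizerEmbedding x q, ?_⟩) fun q r h => ?_
  · induction q using QuotientGroup.induction_on with
    | H g =>
      simpa only [quotientCentralizerEmbedding_apply, commutatorElement_inv] using N.inv_mem (hx g)
  · exact (quotientCentralizerEmbedding x).injective (Subtype.ext (congrArg Subtype.val h :))

lemma Subgroup.exists_mem_upperCentralSeries_two_notMem_center [Group.IsNilpotent G]
    (h : center G ≠ ⊤) : ∃ x ∈ upperCentralSeries G 2, x ∉ center G := by
  rw [← upperCentralSeries_one] at h ⊢
  exact SetLike.exists_of_lt <| (upperCentralSeries_mono G one_le_two).lt_of_ne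
    fun h12 => h (upperCentralSeries.eq_top (by decide : (1 : ℕ) ≠ 2) h12)

lemma Subgroup.two_mul_card_center_le_card_center_centralizer [Finite G] {x : G}
    (hx : x ∉ center G) : 2 * Nat.card (center G) ≤ Nat.card (center (centralizer {x})) := by
  set C := centralizer {x}
  have hlt : center G < (center C).map C.subtype := by
    refine SetLike.lt_iff_le_and_exists.mpr ⟨fun g hg => ?_, x, ?_, hx⟩
    · refine ⟨⟨g, center_le_centralizer {x} hg⟩, ?_, rfl⟩
      exact mem_center_iff.mpr fun h => Subtype.ext (mem_center_iff.mp hg h)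
    · refine ⟨⟨x, mem_centralizer_singleton_iff.mpr rfl⟩, ?_, rfl⟩
      exact mem_center_iff.mpr fun g => Subtype.ext (mem_centralizer_singleton_iff.mp g.2)
  simpa only [card_subtype] using two_mul_card_le_card_of_lt hlt

lemma isMulCommutative_of_index_center_dvd_prime {p : ℕ} [Fact p.Prime]
    (h : (center G).index ∣ p) : IsMulCommutative G :=
  have : IsCyclic (G ⧸ center G) := isCyclic_of_card_dvd_prime (index_eq_card (center G) ▸ h)
  isMulCommutative_of_isCyclic_quotient_center_self G

end

/-- Every group of order 16 has a subgroup of index 2 that is abelian or dihedral. -/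
theorem stmt_14 (G : Type*) [Group G] (hG : Nat.card G = 16) :
    ∃ H : Subgroup G, Nat.card H = 8 ∧
      ((∀ a b : H, a * b = b * a) ∨ Nonempty (H ≃* DihedralGroup 4)) := by
  have : Finite G := Nat.finite_of_card_ne_zero (by omega)
  by_cases hZ : center G = ⊤
  · obtain ⟨H, hH⟩ := Sylow.exists_subgroup_card_pow_prime 2 (n := 3) (by rw [hG]; norm_num)
    exact ⟨H, hH, Or.inl fun a b => Subtype.ext ((mem_center_iff (G := G)).mp (hZ ▸ mem_top _) _)⟩
  have : Group.IsNilpotent G :=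
    (IsPGroup.of_card (p := 2) (n := 4) (by rw [hG]; norm_num)).isNilpotent
  obtain ⟨x, hx2, hxZ⟩ := exists_mem_upperCentralSeries_two_notMem_center hZ
  set C := centralizer {x}
  have hindex_le : C.index ≤ Nat.card (center G) := index_centralizer_le_card
    (Subgroup.upperCentralSeries_one G ▸ Subgroup.mem_upperCentralSeries_succ_iff.mp hx2)
  have hcenter : 2 * Nat.card (center G) ≤ Nat.card (center C) :=
    two_mul_card_center_le_card_center_centralizer hxZ
  have hcenter_le : Nat.card (center C) ≤ Nat.card C := card_le_card_group _
  have hC_ne_top : C ≠ ⊤ := fun h => hxZ (mem_center_iff.mpr fun g =>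
    mem_centralizer_singleton_iff.mp (h ▸ mem_top g : g ∈ C))
  have hindex_gt := one_lt_index_of_ne_top hC_ne_top
  have hcard : Nat.card C * C.index = 16 := hG ▸ C.card_mul_index
  -- `2 i² ≤ 2 i |Z(G)| ≤ i |Z(C)| ≤ i |C| = 16` for `i = |G : C|`
  have hindex : C.index = 2 := by nlinarith
  have hcardC : Nat.card C = 8 := by rw [hindex] at hcard; omega
  have hcenterC : Nat.card (center C) * (center C).index = 8 := hcardC ▸ (center C).card_mul_index
  refine ⟨C, hcardC, Or.inl (isMulCommutative_of_index_center_dvd_prime (p := 2) ?_).is_comm.comm⟩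
  have : (center C).index ≤ 2 := by nlinarith
  have : 0 < (center C).index := Nat.pos_of_ne_zero (center C).index_ne_zero_of_finite
  interval_cases (center C).index <;> norm_num
end

section
/- Let G be a finite group. If N ⊴ G with N ≅ Q₈ and C_G(N) ≤ N, and N is a Sylow 2-subgroup of G, then |G| divides 24; if moreover |G| = 24 then G ≅ SL(2,3) or G is the dicyclic group of order 24. -/
namespace Stmt15
open QuaternionGroup Matrix Multiplicative

abbrev Q8 := QuaternionGroup 2
abbrev M3 := Multiplicative (ZMod 3)
abbrev SL23 := Matrix.SpecialLinearGroup (Fin 2) (ZMod 3)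

instance : DecidableEq SL23 := fun A B =>
  decidable_of_iff ((A : Matrix (Fin 2) (Fin 2) (ZMod 3)) = B) Subtype.ext_iff.symm

/-- candidate automorphism of `Q8` sending `a 1 ↦ x`, `xa 0 ↦ y`. -/
def F (x y : Q8) : Q8 → Q8
  | a i => x ^ i.val
  | xa i => y * x ^ i.val

def Good (x y : Q8) : Prop :=
  (∀ p q : Q8, F x y (p * q) = F x y p * F x y q) ∧ Function.Bijective (F x y)

instance decGood (x y : Q8) : Decidable (Good x y) := by unfold Good; infer_instance

lemma F_spec (σ : MulAut Q8) (z : Q8) : σ z = F (σ (a 1)) (σ (xa 0)) z := by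
  haveI : NeZero (2 * 2) := ⟨by norm_num⟩
  have ha : ∀ i : ZMod (2*2), (a i : Q8) = (a 1) ^ i.val := by
    intro i
    rw [a_one_pow, ZMod.natCast_val, ZMod.cast_id]
  rcases z with i | i
  · calc σ (a i) = σ (a 1) ^ i.val := by rw [ha i, map_pow]
      _ = F (σ (a 1)) (σ (xa 0)) (a i) := rfl
  · have h1 : (xa i : Q8) = xa 0 * a i := by rw [xa_mul_a, zero_add]
    calc σ (xa i) = σ (xa 0) * σ (a i) := by rw [h1, _root_.map_mul]
      _ = σ (xa 0) * σ (a 1) ^ i.val := by rw [ha i, map_pow]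
      _ = F (σ (a 1)) (σ (xa 0)) (xa i) := rfl

/-- build an automorphism from a good pair -/
noncomputable def mkAut (x y : Q8) (h : Good x y) : MulAut Q8 :=
  { Equiv.ofBijective (F x y) h.2 with map_mul' := h.1 }

lemma mkAut_apply (x y : Q8) (h : Good x y) (z : Q8) : mkAut x y h z = F x y z := rfl

lemma good_of_aut (σ : MulAut Q8) : Good (σ (a 1)) (σ (xa 0)) := by
  have hfun : ∀ z, F (σ (a 1)) (σ (xa 0)) z = σ z := fun z => (F_spec σ z).symm
  constructor
  · intro p q; rw [hfun, hfun, hfun, _root_.map_mul]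
  · have : F (σ (a 1)) (σ (xa 0)) = ⇑σ := funext hfun
    rw [this]; exact σ.bijective

noncomputable def autEquivGood : MulAut Q8 ≃ {p : Q8 × Q8 // Good p.1 p.2} where
  toFun σ := ⟨(σ (a 1), σ (xa 0)), good_of_aut σ⟩
  invFun p := mkAut p.1.1 p.1.2 p.2
  left_inv σ := by
    apply MulEquiv.ext; intro z
    rw [mkAut_apply]; exact (F_spec σ z).symm
  right_inv p := by
    apply Subtype.ext
    apply Prod.ext
    · show p.1.1 ^ ((1 : ZMod (2*2))).val = p.1.1
      have : ((1 : ZMod (2*2))).val = 1 := rfl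
      rw [this, pow_one]
    · show p.1.2 * p.1.1 ^ ((0 : ZMod (2*2))).val = p.1.2
      have : ((0 : ZMod (2*2))).val = 0 := rfl
      rw [this, pow_zero, mul_one]

lemma card_mulAut : Nat.card (MulAut Q8) = 24 := by
  rw [Nat.card_congr autEquivGood, Nat.card_eq_fintype_card]
  decide

/-- the explicit automorphism `i ↦ j ↦ k ↦ i`. -/
def σ₀ : MulAut Q8 where
  toFun := F (xa 0) (xa 3)
  invFun := F (xa 3) (a 1)
  left_inv := by decide
  right_inv := by decide
  map_mul' := by decide

lemma σ₀_cube : σ₀ ^ 3 = 1 := by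
  have h : σ₀ ^ 3 = σ₀ * σ₀ * σ₀ := by rw [pow_succ, pow_succ, pow_one]
  rw [h]
  apply MulEquiv.ext
  intro z
  show σ₀ (σ₀ (σ₀ z)) = z
  revert z; decide

lemma classify3 (σ : MulAut Q8) (h3 : σ ^ 3 = 1) (h1 : σ ≠ 1) :
    ∃ q : Q8, σ = MulAut.conj q * σ₀ * (MulAut.conj q)⁻¹ ∨
      σ = MulAut.conj q * σ₀⁻¹ * (MulAut.conj q)⁻¹ := by
  have key : ∀ x y : Q8, Good x y → (∀ z, F x y (F x y (F x y z)) = z) →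
      (¬ ∀ z, F x y z = z) →
      ∃ q : Q8, (∀ z, F x y z = q * F (xa 0) (xa 3) (q⁻¹ * z * q) * q⁻¹) ∨
        (∀ z, F x y z = q * F (xa 3) (a 1) (q⁻¹ * z * q) * q⁻¹) := by decide
  have hσ : ∀ z, σ z = F (σ (a 1)) (σ (xa 0)) z := F_spec σ
  have h9 : ∀ z, σ (σ (σ z)) = z := by
    intro z
    have hp : σ * σ * σ = σ ^ 3 := by rw [pow_succ, pow_succ, pow_one]
    calc σ (σ (σ z)) = (σ * σ * σ) z := rfl
      _ = (σ ^ 3) z := by rw [hp]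
      _ = z := by rw [h3]; rfl
  have hcube : ∀ z, F (σ (a 1)) (σ (xa 0)) (F (σ (a 1)) (σ (xa 0)) (F (σ (a 1)) (σ (xa 0)) z)) = z := by
    intro z
    rw [← hσ, ← hσ, ← hσ]
    exact h9 z
  have hne : ¬ ∀ z, F (σ (a 1)) (σ (xa 0)) z = z := by
    intro hz
    apply h1
    apply MulEquiv.ext
    intro z
    rw [hσ, hz]; rfl
  obtain ⟨q, hq⟩ := key _ _ (good_of_aut σ) hcube hne
  refine ⟨q, ?_⟩
  rcases hq with hq | hq
  · left; apply MulEquiv.ext; intro z; rw [hσ, hq]; rfl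
  · right; apply MulEquiv.ext; intro z; rw [hσ, hq]; rfl

/-- hom out of `M3` determined by an element whose cube is 1 -/
def powHom3 {A : Type*} [Group A] (w : A) (h : w ^ 3 = 1) : M3 →* A where
  toFun m := w ^ (toAdd m).val
  map_one' := by
    show w ^ (0 : ZMod 3).val = 1
    have : (0 : ZMod 3).val = 0 := rfl
    rw [this, pow_zero]
  map_mul' m m' := by
    show w ^ ((toAdd m) + (toAdd m')).val = w ^ (toAdd m).val * w ^ (toAdd m').val
    rw [ZMod.val_add, ← pow_eq_pow_mod _ h, pow_add]

lemma powHom3_apply {A : Type*} [Group A] (w : A) (h : w ^ 3 = 1) (m : M3) :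
    powHom3 w h m = w ^ (toAdd m).val := rfl

/-- every hom out of `M3` is a power of its value at `ofAdd 1` -/
lemma hom_m3_eq_pow {A : Type*} [Group A] (χ : M3 →* A) (m : M3) :
    χ m = χ (ofAdd 1) ^ (toAdd m).val := by
  have : m = (ofAdd 1) ^ (toAdd m).val := by
    rw [← ofAdd_nsmul]
    show m = ofAdd ((toAdd m).val • (1 : ZMod 3))
    rw [nsmul_eq_mul, mul_one, ZMod.natCast_val, ZMod.cast_id]
    rfl
  conv_lhs => rw [this]
  rw [map_pow]

def ψ₀ : M3 →* MulAut Q8 := powHom3 σ₀ σ₀_cube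

def Im : SL23 := ⟨!![0,2;1,0], by decide⟩
def Jm : SL23 := ⟨!![1,1;1,2], by decide⟩
def Wm : SL23 := ⟨!![1,1;0,1], by decide⟩

def g1 : Q8 → SL23
  | a i => Im ^ i.val
  | xa i => Jm * Im ^ i.val

def f₁ : Q8 →* SL23 := MonoidHom.mk' g1 (by decide)
def f₂ : M3 →* SL23 := powHom3 Wm (by decide)

lemma compatE : ∀ (m : M3) (q : Q8), f₁ (ψ₀ m q) = f₂ m * f₁ q * (f₂ m)⁻¹ := by decide

def Ehom : (Q8 ⋊[ψ₀] M3) →* SL23 :=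
  SemidirectProduct.lift f₁ f₂ (fun m => MonoidHom.ext fun q => compatE m q)

def sdEquivProd : (Q8 × M3) ≃ (Q8 ⋊[ψ₀] M3) where
  toFun p := ⟨p.1, p.2⟩
  invFun x := (x.left, x.right)
  left_inv _ := rfl
  right_inv _ := rfl

instance : Fintype (Q8 ⋊[ψ₀] M3) := Fintype.ofEquiv _ sdEquivProd

lemma Ehom_bij : Function.Bijective Ehom := by
  rw [Fintype.bijective_iff_injective_and_card]
  constructor
  · rw [injective_iff_map_eq_one]
    decide
  · decide

noncomputable def Eiso : (Q8 ⋊[ψ₀] M3) ≃* SL23 := MulEquiv.ofBijective Ehom Ehom_bij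

/-- the "center" subgroup used to bound the centralizer -/
def CQ : Subgroup Q8 := Subgroup.centralizer Set.univ

instance : DecidablePred (· ∈ CQ) := fun z =>
  decidable_of_iff (∀ g : Q8, g * z = z * g)
    (by simp [CQ, Subgroup.mem_centralizer_iff])

lemma mem_CQ {z : Q8} (h : ∀ g : Q8, g * z = z * g) : z ∈ CQ :=
  Subgroup.mem_centralizer_iff.2 fun g _ => h g

lemma card_CQ : Nat.card CQ = 2 := by
  rw [Nat.card_eq_fintype_card]
  decide

lemma card_Q8 : Nat.card Q8 = 8 := by
  rw [Nat.card_eq_fintype_card]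
  decide

lemma card_M3 : Nat.card M3 = 3 := by
  rw [Nat.card_congr (toAdd : M3 ≃ ZMod 3), Nat.card_zmod]

lemma card_sd : Nat.card (Q8 ⋊[ψ₀] M3) = 24 := by
  rw [Nat.card_congr sdEquivProd.symm, Nat.card_prod, card_Q8, card_M3]

lemma ofAdd_one_ne : (ofAdd (1 : ZMod 3)) ≠ (1 : M3) := by decide

lemma ofAdd_one_cube : (ofAdd (1 : ZMod 3)) ^ 3 = (1 : M3) := by decide

end Stmt15

open Stmt15 QuaternionGroup Multiplicative in
/-- If a finite group `G` has a normal Sylow 2-subgroup `N ≅ Q₈` with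
`C_G(N) ≤ N`, then `|G|` divides 24; and if `|G| = 24` then `G ≅ SL(2,3)` or `G`
is the dicyclic group of order 24. -/
theorem stmt_15 {G : Type*} [Group G] [Finite G] (N : Subgroup G) [N.Normal]
    (hQ : Nonempty (N ≃* QuaternionGroup 2))
    (hC : Subgroup.centralizer (N : Set G) ≤ N)
    (hSyl : Odd N.index) :
    Nat.card G ∣ 24 ∧
      (Nat.card G = 24 →
        Nonempty (G ≃* Matrix.SpecialLinearGroup (Fin 2) (ZMod 3)) ∨
          Nonempty (G ≃* QuaternionGroup 6)) := by
  obtain ⟨e⟩ := hQ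
  set φ : G →* MulAut Q8 := (MulAut.congr e).toMonoidHom.comp MulAut.conjNormal with hφdef
  have hφ_apply : ∀ (g : G) (n : N), φ g (e n) = e (MulAut.conjNormal g n) := by
    intro g n
    show (MulAut.congr e) (MulAut.conjNormal g) (e n) = _
    simp [MulAut.congr]
  -- kernel of φ is the centralizer
  have hker : φ.ker = Subgroup.centralizer (N : Set G) := by
    ext g
    constructor
    · intro h
      have h0 : MulAut.conjNormal g = (1 : MulAut N) := by
        have h1 : (MulAut.congr e) (MulAut.conjNormal g) = 1 := h
        exact (MulEquiv.map_eq_one_iff _).1 h1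
      rw [Subgroup.mem_centralizer_iff]
      intro m hm
      have h2 : MulAut.conjNormal g (⟨m, hm⟩ : N) = ⟨m, hm⟩ := by rw [h0]; rfl
      have h3 : g * m * g⁻¹ = m := by
        have := congrArg (Subtype.val) h2
        rwa [MulAut.conjNormal_apply] at this
      calc m * g = (g * m * g⁻¹) * g := by rw [h3]
        _ = g * m := by group
    · intro h
      have h0 : MulAut.conjNormal g = (1 : MulAut N) := by
        apply MulEquiv.ext
        intro n
        apply Subtype.ext
        rw [MulAut.conjNormal_apply]
        have := (Subgroup.mem_centralizer_iff.1 h) (n : G) n.2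
        calc g * n * g⁻¹ = (n * g) * g⁻¹ := by rw [this]
          _ = n := by group
      show (MulAut.congr e) (MulAut.conjNormal g) = 1
      rw [h0, map_one]
  -- the kernel has order dividing 2
  have hkerN : φ.ker ≤ N := by rw [hker]; exact hC
  have hkc : ∀ g ∈ φ.ker, ∀ m ∈ N, m * g = g * m := by
    intro g hg
    rw [hker] at hg
    exact fun m hm => Subgroup.mem_centralizer_iff.1 hg m hm
  have cardker : Nat.card φ.ker ∣ 2 := by
    -- define the hom into CQ
    let θ : φ.ker →* CQ := {
      toFun := fun k => ⟨e ⟨(k : G), hkerN k.2⟩, mem_CQ (by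
        intro x
        have hx : x = e (e.symm x) := by rw [MulEquiv.apply_symm_apply]
        rw [hx, ← _root_.map_mul, ← _root_.map_mul]
        congr 1
        apply Subtype.ext
        show (e.symm x : G) * (k : G) = (k : G) * (e.symm x : G)
        exact hkc _ k.2 _ (e.symm x).2)⟩
      map_one' := by
        apply Subtype.ext
        show e ⟨(1 : G), _⟩ = 1
        have : (⟨(1 : G), hkerN (Subgroup.one_mem _)⟩ : N) = 1 := rfl
        rw [this, map_one]
      map_mul' := by
        intro k k'
        apply Subtype.ext
        show e ⟨(k : G) * (k' : G), _⟩ = e ⟨(k : G), _⟩ * e ⟨(k' : G), _⟩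
        rw [← _root_.map_mul]
        rfl }
    have θinj : Function.Injective θ := by
      intro k k' h
      have h1 : e ⟨(k : G), hkerN k.2⟩ = e ⟨(k' : G), hkerN k'.2⟩ := congrArg Subtype.val h
      have h2 := e.injective h1
      have h3 : ((⟨(k : G), hkerN k.2⟩ : N) : G) = ((⟨(k' : G), hkerN k'.2⟩ : N) : G) :=
        Subtype.ext_iff.1 h2
      exact Subtype.ext h3
    calc Nat.card φ.ker ∣ Nat.card CQ := Subgroup.card_dvd_of_injective θ θinj
      _ = 2 := card_CQ
  -- |G| divides 48
  have hcard48 : Nat.card G ∣ 48 := by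
    have h1 : Nat.card G = Nat.card (G ⧸ φ.ker) * Nat.card φ.ker :=
      Subgroup.card_eq_card_quotient_mul_card_subgroup φ.ker
    have h2 : Nat.card (G ⧸ φ.ker) = Nat.card φ.range :=
      Nat.card_congr (QuotientGroup.quotientKerEquivRange φ).toEquiv
    have h3 : Nat.card φ.range ∣ 24 := card_mulAut ▸ Subgroup.card_subgroup_dvd_card φ.range
    rw [h1, h2]
    have : (48 : ℕ) = 24 * 2 := by norm_num
    rw [this]
    exact Nat.mul_dvd_mul h3 cardker
  have hcardN : Nat.card N = 8 := by rw [Nat.card_congr e.toEquiv, card_Q8]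
  have hNidx : 8 * N.index = Nat.card G := by rw [← hcardN]; exact N.card_mul_index
  have hidx3 : N.index ∣ 3 := by
    have h6 : N.index ∣ 6 := by
      have : 8 * N.index ∣ 8 * 6 := by rw [hNidx]; exact hcard48
      exact (mul_dvd_mul_iff_left (by norm_num : (8:ℕ) ≠ 0)).1 this
    have hcop : Nat.Coprime N.index 2 := Nat.coprime_two_right.2 hSyl
    have : N.index ∣ 2 * 3 := by norm_num at h6 ⊢; exact h6
    exact (Nat.Coprime.dvd_of_dvd_mul_left hcop this)
  constructor
  · have : Nat.card G = 8 * N.index := hNidx.symm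
    rw [this]
    calc 8 * N.index ∣ 8 * 3 := Nat.mul_dvd_mul_left 8 hidx3
      _ = 24 := by norm_num
  -- second part
  intro h24
  left
  have hidx : N.index = 3 := by omega
  -- Schur-Zassenhaus complement
  have hcop : Nat.Coprime (Nat.card N) N.index := by rw [hcardN, hidx]; norm_num
  obtain ⟨H, hH⟩ := Subgroup.exists_right_complement'_of_coprime hcop
  have cardH : Nat.card H = 3 := by
    have := hH.card_mul
    rw [hcardN, h24] at this
    omega
  haveI : Fact (Nat.Prime 3) := ⟨by norm_num⟩
  have c : M3 ≃* H := mulEquivOfPrimeCardEq card_M3 cardH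
  -- the action of H on Q8
  have hσ3 : ∀ c' : M3 ≃* H, (φ ((c' (ofAdd 1) : H) : G)) ^ 3 = 1 := by
    intro c'
    have h0 : c' ((ofAdd (1 : ZMod 3)) ^ 3) = 1 := by rw [ofAdd_one_cube, map_one]
    calc φ ((c' (ofAdd 1) : H) : G) ^ 3 = φ (((c' (ofAdd 1) : H) : G) ^ 3) := by rw [map_pow]
      _ = φ (((c' (ofAdd 1) ^ 3 : H) : G)) := by norm_cast
      _ = φ (((c' ((ofAdd 1) ^ 3) : H) : G)) := by rw [map_pow]
      _ = φ (((1 : H) : G)) := by rw [h0]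
      _ = 1 := by rw [OneMemClass.coe_one, map_one]
  have hσne : ∀ c' : M3 ≃* H, (φ ((c' (ofAdd 1) : H) : G)) ≠ 1 := by
    intro c' hone
    have hmem : ((c' (ofAdd 1) : H) : G) ∈ φ.ker := hone
    rw [hker] at hmem
    have hN : ((c' (ofAdd 1) : H) : G) ∈ N := hC hmem
    have h1 : ((c' (ofAdd 1) : H) : G) = 1 :=
      Subgroup.disjoint_def.1 hH.disjoint hN (c' (ofAdd 1)).2
    have h2 : c' (ofAdd 1) = 1 := Subtype.ext h1
    have h3 : (ofAdd (1 : ZMod 3)) = (1 : M3) := c'.injective (by rw [h2, map_one])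
    exact ofAdd_one_ne h3
  -- classify and normalize the action
  obtain ⟨q₀, hq₀⟩ := classify3 _ (hσ3 c) (hσne c)
  have key : ∃ c' : M3 ≃* H,
      φ ((c' (ofAdd 1) : H) : G) = MulAut.conj q₀ * σ₀ * (MulAut.conj q₀)⁻¹ := by
    rcases hq₀ with h | h
    · exact ⟨c, h⟩
    · refine ⟨(MulEquiv.inv M3).trans c, ?_⟩
      have h1 : ((MulEquiv.inv M3).trans c) (ofAdd 1) = (c (ofAdd 1))⁻¹ := by
        show c ((ofAdd (1:ZMod 3))⁻¹) = (c (ofAdd 1))⁻¹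
        rw [map_inv]
      rw [h1]
      push_cast
      rw [map_inv, h]
      group
  obtain ⟨c', hc'⟩ := key
  -- build the isomorphism G ≃ Q8 ⋊ M3
  set u : MulAut Q8 := MulAut.conj q₀ with hu
  set χ : M3 →* MulAut Q8 := φ.comp (H.subtype.comp c'.toMonoidHom) with hχ
  have hχ1 : χ (ofAdd 1) = u * σ₀ * u⁻¹ := hc'
  have hχm : ∀ m : M3, χ m = u * (ψ₀ m) * u⁻¹ := by
    intro m
    rw [hom_m3_eq_pow χ m, hχ1]
    show _ = u * (σ₀ ^ (toAdd m).val) * u⁻¹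
    rw [conj_pow]
  set j₁ : Q8 →* G := N.subtype.comp (e.symm.toMonoidHom.comp (u : MulAut Q8).toMonoidHom)
    with hj₁
  set j₂ : M3 →* G := H.subtype.comp c'.toMonoidHom with hj₂
  have compat : ∀ (m : M3) (q : Q8), j₁ (ψ₀ m q) = j₂ m * j₁ q * (j₂ m)⁻¹ := by
    intro m q
    have e1 : j₂ m * j₁ q * (j₂ m)⁻¹ =
        ((MulAut.conjNormal ((c' m : H) : G) (e.symm (u q)) : N) : G) := by
      rw [MulAut.conjNormal_apply]
      rfl
    have e2 : MulAut.conjNormal ((c' m : H) : G) (e.symm (u q)) = e.symm (χ m (u q)) := by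
      have := hφ_apply ((c' m : H) : G) (e.symm (u q))
      rw [MulEquiv.apply_symm_apply] at this
      have h4 : χ m (u q) = φ ((c' m : H) : G) (u q) := rfl
      rw [h4, this, MulEquiv.symm_apply_apply]
    have e3 : χ m (u q) = u (ψ₀ m q) := by
      rw [hχm m]
      show u ((ψ₀ m) (u⁻¹ (u q))) = u (ψ₀ m q)
      congr 1
      show (ψ₀ m) ((u.symm) (u q)) = ψ₀ m q
      rw [MulEquiv.symm_apply_apply]
    rw [e1, e2, e3]
    rfl
  set Λ : (Q8 ⋊[ψ₀] M3) →* G :=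
    SemidirectProduct.lift j₁ j₂ (fun m => MonoidHom.ext fun q => compat m q) with hΛ
  have Λmk : ∀ (q : Q8) (m : M3), Λ ⟨q, m⟩ = j₁ q * j₂ m := by
    intro q m
    rw [SemidirectProduct.mk_eq_inl_mul_inr, map_mul, SemidirectProduct.lift_inl,
      SemidirectProduct.lift_inr]
  have Λinj : Function.Injective Λ := by
    rw [injective_iff_map_eq_one]
    rintro ⟨q, m⟩ hx
    rw [Λmk] at hx
    have hn : j₁ q = (j₂ m)⁻¹ := eq_inv_of_mul_eq_one_left hx
    have hnN : j₁ q ∈ N := (e.symm (u q)).2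
    have hnH : j₁ q ∈ H := by rw [hn]; exact Subgroup.inv_mem _ (c' m).2
    have h1 : j₁ q = 1 := Subgroup.disjoint_def.1 hH.disjoint hnN hnH
    have hq1 : q = 1 := by
      have h2 : e.symm (u q) = 1 := Subtype.ext h1
      have h3 : u q = 1 := by
        have := congrArg e h2
        rwa [MulEquiv.apply_symm_apply, map_one] at this
      have h4 : u q = u 1 := by rw [h3, map_one]
      exact u.injective h4
    have hm1 : m = 1 := by
      have h2 : j₂ m = 1 := by rw [← hx, hq1, map_one, one_mul]
      have h3 : c' m = 1 := Subtype.ext h2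
      exact c'.injective (by rw [h3, map_one])
    rw [hq1, hm1]
    rfl
  have Λbij : Function.Bijective Λ := by
    rw [Nat.bijective_iff_injective_and_card]
    exact ⟨Λinj, by rw [card_sd, h24]⟩
  exact ⟨((MulEquiv.ofBijective Λ Λbij).symm.trans Eiso)⟩
end
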